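/- arXiv:1401.6383 — 6 statements merged into one kernel-verified Lean document; each statement's English description precedes it below -/
import Mathlib

section
/- Let X be a nonnegative integrable random variable, and for K ≥ 0 let V(K) = E[(X - K)^+]. Then the right derivative of V at K satisfies ∂⁺V(K) = -Q(X > K) for every K ≥ 0, and the left derivative satisfies ∂⁻V(K) = -Q(X ≥ K) for every K > 0. -/
/-!
For each outcome ω the hinge k ↦ (X ω - k)⁺ is 1-Lipschitz, and its one-sided derivatives at K
are -1 or 0 according to whether X ω lies strictly above K (from the right) or at or above K
(from the left). The difference quotients of V are the expectations of those of the hinges, which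
are bounded by 1, so dominated convergence lets the one-sided derivative pass under the integral.
-/

open MeasureTheory Filter Set Topology

lemma LipschitzWith.norm_slope_le {f : ℝ → ℝ} {C : NNReal} (hf : LipschitzWith C f) (a b : ℝ) :
    ‖slope f a b‖ ≤ C := by
  rcases eq_or_ne b a with rfl | hne
  · simp
  rw [slope_def_field, norm_div, div_le_iff₀ (norm_pos_iff.2 (sub_ne_zero.2 hne))]
  simpa only [← dist_eq_norm] using hf.dist_le_mul b a

theorem hasDerivWithinAt_integral_of_lipschitzWith {Ω : Type*} [MeasurableSpace Ω]
    {μ : Measure Ω} [IsFiniteMeasure μ] {F : ℝ → Ω → ℝ} {F' : Ω → ℝ} {C : NNReal}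
    {s : Set ℝ} {x₀ : ℝ} (hF_int : ∀ x, Integrable (F x) μ)
    (hF_lip : ∀ᵐ ω ∂μ, LipschitzWith C (F · ω))
    (hF' : ∀ᵐ ω ∂μ, HasDerivWithinAt (F · ω) (F' ω) s x₀) :
    HasDerivWithinAt (fun x => ∫ ω, F x ω ∂μ) (∫ ω, F' ω ∂μ) s x₀ := by
  have slope_integral : slope (fun x => ∫ ω, F x ω ∂μ) x₀ =
      fun x => ∫ ω, slope (F · ω) x₀ x ∂μ := by
    funext x
    simp only [slope_def_field]
    rw [← integral_sub (hF_int x) (hF_int x₀), integral_div]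
  rw [hasDerivWithinAt_iff_tendsto_slope, slope_integral]
  refine tendsto_integral_filter_of_dominated_convergence (fun _ => (C : ℝ)) ?_ ?_
    (integrable_const _) ?_
  · refine Eventually.of_forall fun x => ?_
    simp only [slope_def_field]
    exact (((hF_int x).sub (hF_int x₀)).div_const _).aestronglyMeasurable
  · exact Eventually.of_forall fun x => hF_lip.mono fun ω h => h.norm_slope_le x₀ x
  · exact hF'.mono fun ω h => hasDerivWithinAt_iff_tendsto_slope.1 h

lemma lipschitzWith_max_sub_zero (x : ℝ) : LipschitzWith 1 (fun k : ℝ => max (x - k) 0) :=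
  LipschitzWith.of_dist_le_mul fun a b => by
    simpa [Real.dist_eq, abs_sub_comm] using abs_max_sub_max_le_abs (x - a) (x - b) 0

lemma hasDerivWithinAt_max_sub_zero_Ici (x K : ℝ) :
    HasDerivWithinAt (fun k => max (x - k) 0) (-(Ioi K).indicator 1 x) (Ici K) K := by
  by_cases hx : K < x
  · have hlin : (fun k => max (x - k) 0) =ᶠ[𝓝 K] fun k => x - k :=
      (eventually_lt_nhds hx).mono fun k hk => max_eq_left (by linarith)
    simpa [hx] using ((hasDerivAt_id K).const_sub x).congr_of_eventuallyEq hlin |>.hasDerivWithinAt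
  · have hzero : EqOn (fun k => max (x - k) 0) 0 (Ici K) := fun k hk =>
      max_eq_right (by linarith [mem_Ici.1 hk, not_lt.1 hx])
    simpa [hx] using (hasDerivWithinAt_const K (Ici K) (0 : ℝ)).congr hzero (hzero self_mem_Ici)

lemma hasDerivWithinAt_max_sub_zero_Iic (x K : ℝ) :
    HasDerivWithinAt (fun k => max (x - k) 0) (-(Ici K).indicator 1 x) (Iic K) K := by
  by_cases hx : K ≤ x
  · have hlin : EqOn (fun k => max (x - k) 0) (fun k => x - k) (Iic K) := fun k hk =>
      max_eq_left (by linarith [mem_Iic.1 hk])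
    simpa [hx] using ((hasDerivAt_id K).const_sub x).hasDerivWithinAt.congr hlin
      (hlin self_mem_Iic)
  · have hzero : (fun k => max (x - k) 0) =ᶠ[𝓝 K] fun _ => 0 :=
      (eventually_gt_nhds (not_le.1 hx)).mono fun k hk => max_eq_right (by linarith)
    simpa [hx] using ((hasDerivAt_const K (0 : ℝ)).congr_of_eventuallyEq hzero).hasDerivWithinAt

lemma integral_indicator_one_comp {Ω : Type*} [MeasurableSpace Ω] {μ : Measure Ω}
    {X : Ω → ℝ} (hX : Measurable X) {s : Set ℝ} (hs : MeasurableSet s) :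
    ∫ ω, s.indicator 1 (X ω) ∂μ = μ.real (X ⁻¹' s) :=
  integral_indicator_one (hX hs)

theorem stmt3_general {Ω : Type*} [MeasurableSpace Ω] (Q : Measure Ω) [IsProbabilityMeasure Q]
    (X : Ω → ℝ) (hXm : Measurable X) (hXint : Integrable X Q) :
    (∀ K : ℝ, 0 ≤ K → HasDerivWithinAt (fun K => ∫ ω, max (X ω - K) 0 ∂Q)
        (-(Q {ω | K < X ω}).toReal) (Set.Ici K) K) ∧
    (∀ K : ℝ, 0 < K → HasDerivWithinAt (fun K => ∫ ω, max (X ω - K) 0 ∂Q)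
        (-(Q {ω | K ≤ X ω}).toReal) (Set.Iic K) K) := by
  have hint (k : ℝ) : Integrable (fun ω => max (X ω - k) 0) Q :=
    (hXint.sub (integrable_const k)).pos_part
  have hlip : ∀ᵐ ω ∂Q, LipschitzWith 1 fun k => max (X ω - k) 0 :=
    ae_of_all _ fun ω => lipschitzWith_max_sub_zero (X ω)
  refine ⟨fun K _ => ?_, fun K _ => ?_⟩
  · have hderiv := hasDerivWithinAt_integral_of_lipschitzWith hint hlip
      (ae_of_all _ fun ω => hasDerivWithinAt_max_sub_zero_Ici (X ω) K)
    rwa [integral_neg, integral_indicator_one_comp hXm measurableSet_Ioi] at hderiv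
  · have hderiv := hasDerivWithinAt_integral_of_lipschitzWith hint hlip
      (ae_of_all _ fun ω => hasDerivWithinAt_max_sub_zero_Iic (X ω) K)
    rwa [integral_neg, integral_indicator_one_comp hXm measurableSet_Ici] at hderiv

theorem stmt3 {Ω : Type*} [MeasurableSpace Ω] (Q : Measure Ω) [IsProbabilityMeasure Q]
    (X : Ω → ℝ) (hXm : Measurable X) (hXpos : ∀ ω, 0 ≤ X ω) (hXint : Integrable X Q) :
    (∀ K : ℝ, 0 ≤ K → HasDerivWithinAt (fun K => ∫ ω, max (X ω - K) 0 ∂Q)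
        (-(Q {ω | K < X ω}).toReal) (Set.Ici K) K) ∧
    (∀ K : ℝ, 0 < K → HasDerivWithinAt (fun K => ∫ ω, max (X ω - K) 0 ∂Q)
        (-(Q {ω | K ≤ X ω}).toReal) (Set.Iic K) K) :=
  stmt3_general Q X hXm hXint
end

section
/- Let S and M be nonnegative random variables with S integrable and Q(S = 0) = 0. Define the barrier option value V(H, K) = E[1_{M ≥ H} (S - K)^+]. Then the right derivative in K at K = 0 satisfies lim_{K→0⁺} (V(H,K) - V(H,0))/K = -Q(M ≥ H) for every H > 0. -/
/-!
For `s ≥ 0` one has `(s - K)⁺ - s⁺ = -min s K`, so the difference quotient equals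
`-∫_{M ≥ H} min S K / K`. Since `S > 0` almost surely, `min S K / K → 1` almost surely as `K ↓ 0`,
boundedly by `1`, and dominated convergence gives the limit `-Q(M ≥ H)`.
-/

open MeasureTheory Filter Set Topology

lemma max_sub_sub_max_eq_neg_min {s : ℝ} (hs : 0 ≤ s) (K : ℝ) :
    max (s - K) 0 - max s 0 = -min s K := by
  rcases le_total s K with h | h
  · rw [min_eq_left h, max_eq_right (by linarith), max_eq_left hs]; ring
  · rw [min_eq_right h, max_eq_left (by linarith), max_eq_left hs]; ring

section

variable {Ω : Type*} [MeasurableSpace Ω] {μ : Measure Ω} [IsFiniteMeasure μ] {f : Ω → ℝ}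

lemma integral_max_sub_sub_integral_max_eq_neg_integral_min (hf : Integrable f μ)
    (hf_nonneg : ∀ ω, 0 ≤ f ω) (K : ℝ) :
    ∫ ω, max (f ω - K) 0 ∂μ - ∫ ω, max (f ω) 0 ∂μ = -∫ ω, min (f ω) K ∂μ := by
  have hfK : Integrable (fun ω => f ω - K) μ := hf.sub (integrable_const K)
  rw [← integral_sub hfK.pos_part hf.pos_part, ← integral_neg]
  exact integral_congr_ae (.of_forall fun ω => max_sub_sub_max_eq_neg_min (hf_nonneg ω) K)

lemma tendsto_integral_min_div_nhdsGT (hf : AEStronglyMeasurable f μ)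
    (hf_pos : ∀ᵐ ω ∂μ, 0 < f ω) :
    Tendsto (fun K => ∫ ω, min (f ω) K / K ∂μ) (𝓝[>] 0) (𝓝 (μ.real univ)) := by
  have hlim : Tendsto (fun K => ∫ ω, min (f ω) K / K ∂μ) (𝓝[>] 0) (𝓝 (∫ _, (1 : ℝ) ∂μ)) := by
    refine tendsto_integral_filter_of_dominated_convergence (fun _ => 1)
      (.of_forall fun K =>
        ((hf.aemeasurable.min aemeasurable_const).div_const K).aestronglyMeasurable) ?_
      (integrable_const 1) ?_
    · filter_upwards [self_mem_nhdsWithin] with K (hK : 0 < K)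
      filter_upwards [hf_pos] with ω hω
      rw [Real.norm_eq_abs, abs_of_nonneg (div_nonneg (le_min hω.le hK.le) hK.le),
        div_le_one hK]
      exact min_le_right _ _
    · filter_upwards [hf_pos] with ω hω
      refine tendsto_const_nhds.congr' ?_
      filter_upwards [Ioo_mem_nhdsGT hω] with K hK
      rw [min_eq_right hK.2.le, div_self hK.1.ne']
  simpa using hlim

end

theorem stmt5_general {Ω : Type*} [MeasurableSpace Ω] (Q : Measure Ω) [IsProbabilityMeasure Q]
    (S M : Ω → ℝ)
    (hSpos : ∀ ω, 0 ≤ S ω)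
    (hSint : Integrable S Q) (hS0 : Q {ω | S ω = 0} = 0) :
    ∀ H : ℝ, 0 < H →
      Tendsto (fun K =>
          ((∫ ω in {ω | H ≤ M ω}, max (S ω - K) 0 ∂Q) -
            ∫ ω in {ω | H ≤ M ω}, max (S ω - 0) 0 ∂Q) / K)
        (𝓝[>] (0:ℝ)) (𝓝 (-(Q {ω | H ≤ M ω}).toReal)) := by
  intro H _
  set A := {ω | H ≤ M ω}
  have hS_pos : ∀ᵐ ω ∂Q.restrict A, 0 < S ω := by
    have hS_ne : ∀ᵐ ω ∂Q, S ω ≠ 0 := measure_eq_zero_iff_ae_notMem.mp hS0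
    filter_upwards [ae_restrict_of_ae hS_ne] with ω hω
    exact (hSpos ω).lt_of_ne' hω
  have hlim := (tendsto_integral_min_div_nhdsGT hSint.restrict.aestronglyMeasurable hS_pos).neg
  rw [Measure.real, Measure.restrict_apply_univ] at hlim
  refine hlim.congr' ?_
  filter_upwards with K
  simp_rw [sub_zero, integral_max_sub_sub_integral_max_eq_neg_integral_min hSint.restrict hSpos,
    neg_div, integral_div]

theorem stmt5 {Ω : Type*} [MeasurableSpace Ω] (Q : Measure Ω) [IsProbabilityMeasure Q]
    (S M : Ω → ℝ) (hSm : Measurable S) (hMm : Measurable M)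
    (hSpos : ∀ ω, 0 ≤ S ω) (hMpos : ∀ ω, 0 ≤ M ω)
    (hSint : Integrable S Q) (hS0 : Q {ω | S ω = 0} = 0) :
    ∀ H : ℝ, 0 < H →
      Tendsto (fun K =>
          ((∫ ω in {ω | H ≤ M ω}, max (S ω - K) 0 ∂Q) -
            ∫ ω in {ω | H ≤ M ω}, max (S ω - 0) 0 ∂Q) / K)
        (𝓝[>] (0:ℝ)) (𝓝 (-(Q {ω | H ≤ M ω}).toReal)) :=
  stmt5_general Q S M hSpos hSint hS0
end

section
/- Let S and M be nonnegative random variables with S and M integrable and Q(S = 0) = 0. Then the lookback price E[(M - K)^+] equals -∫_K^∞ [lim_{k→0⁺} (E[1_{M ≥ H}(S-k)^+] - E[1_{M ≥ H} S])/k] dH for every K ≥ 0; i.e., E[(M-K)^+] = ∫_K^∞ Q(M ≥ H) dH where Q(M ≥ H) = -∂⁺_k|_{k=0} E[1_{M≥H}(S-k)^+]. -/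
/-!
Since `(x - k)⁺ - x = -min x k`, the difference quotient of the barrier price at zero strike is
`-E[1_A min(S, k) / k]`, and `min(S, k) / k → 1` boundedly on `{S > 0}`, which has full measure;
so the right derivative is `-Q(A)`. The lookback identity is the layer-cake formula for
`(M - K)⁺`, whose superlevel set at height `t > 0` is `{M ≥ t + K}`, followed by the shift
`H = t + K`.
-/

open MeasureTheory Filter Set Topology

lemma max_sub_zero_eq_sub_min (x k : ℝ) : max (x - k) 0 = x - min x k := by
  rcases le_total x k with h | h <;> simp [h]

namespace MeasureTheory

variable {Ω : Type*} [MeasurableSpace Ω] {μ : Measure Ω} [IsFiniteMeasure μ] {f : Ω → ℝ}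

lemma tendsto_integral_min_div_nhdsGT_zero (hf : AEStronglyMeasurable f μ)
    (hpos : ∀ᵐ ω ∂μ, 0 < f ω) :
    Tendsto (fun k => ∫ ω, min (f ω) k / k ∂μ) (𝓝[>] 0) (𝓝 (μ.real univ)) := by
  rw [show μ.real univ = ∫ _, (1 : ℝ) ∂μ by simp]
  refine tendsto_integral_filter_of_dominated_convergence (fun _ => 1)
    (Eventually.of_forall fun k =>
      ((hf.aemeasurable.min aemeasurable_const).div_const k).aestronglyMeasurable) ?_
    (integrable_const 1) ?_
  · filter_upwards [self_mem_nhdsWithin] with k (hk : 0 < k)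
    filter_upwards [hpos] with ω hω
    rw [Real.norm_of_nonneg (div_nonneg (le_min hω.le hk.le) hk.le), div_le_one hk]
    exact min_le_right _ _
  · filter_upwards [hpos] with ω hω
    refine tendsto_const_nhds.congr' ?_
    filter_upwards [Ioo_mem_nhdsGT hω] with k hk
    rw [min_eq_right hk.2.le, div_self hk.1.ne']

lemma tendsto_integral_max_sub_sub_integral_div_nhdsGT_zero (hf : Integrable f μ)
    (hpos : ∀ᵐ ω ∂μ, 0 < f ω) :
    Tendsto (fun k => ((∫ ω, max (f ω - k) 0 ∂μ) - ∫ ω, f ω ∂μ) / k) (𝓝[>] 0)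
      (𝓝 (-μ.real univ)) := by
  refine (tendsto_integral_min_div_nhdsGT_zero hf.aestronglyMeasurable hpos).neg.congr' ?_
  filter_upwards [self_mem_nhdsWithin] with k (hk : 0 < k)
  have hint : Integrable (fun ω => max (f ω - k) 0) μ := (hf.sub (integrable_const k)).pos_part
  rw [← integral_sub hint hf, ← integral_div, ← integral_neg]
  simp only [max_sub_zero_eq_sub_min, sub_sub_cancel_left, neg_div]

lemma integral_max_sub_const_eq_integral_Ioi_meas_le (hf : Integrable f μ) (K : ℝ) :
    ∫ ω, max (f ω - K) 0 ∂μ = ∫ H in Ioi K, μ.real {ω | H ≤ f ω} := by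
  have hint : Integrable (fun ω => max (f ω - K) 0) μ := (hf.sub (integrable_const K)).pos_part
  rw [hint.integral_eq_integral_meas_le (Eventually.of_forall fun ω => le_max_right _ _)]
  have hshift : ∀ t ∈ Ioi (0 : ℝ),
      μ.real {ω | t ≤ max (f ω - K) 0} = μ.real {ω | t + K ≤ f ω} := by
    intro t (ht : 0 < t)
    congr 1
    ext ω
    simp [not_le.mpr ht, le_sub_iff_add_le]
  rw [setIntegral_congr_fun measurableSet_Ioi hshift,
    ← (measurePreserving_add_right volume K).setIntegral_preimage_emb
      (Homeomorph.addRight K).measurableEmbedding _ (Ioi K)]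
  congr
  ext t
  simp

end MeasureTheory

theorem stmt6_general {Ω : Type*} [MeasurableSpace Ω] (Q : Measure Ω) [IsProbabilityMeasure Q]
    (S M : Ω → ℝ)
    (hSpos : ∀ ω, 0 ≤ S ω)
    (hSint : Integrable S Q) (hMint : Integrable M Q) (hS0 : Q {ω | S ω = 0} = 0) :
    ∀ K : ℝ, 0 ≤ K →
      (∀ H : ℝ, 0 < H →
        Tendsto (fun k =>
            ((∫ ω in {ω | H ≤ M ω}, max (S ω - k) 0 ∂Q) -
              ∫ ω in {ω | H ≤ M ω}, S ω ∂Q) / k)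
          (𝓝[>] (0:ℝ)) (𝓝 (-(Q {ω | H ≤ M ω}).toReal))) ∧
      ∫ ω, max (M ω - K) 0 ∂Q = ∫ H in Set.Ioi K, (Q {ω | H ≤ M ω}).toReal := by
  have hSpos_ae : ∀ᵐ ω ∂Q, 0 < S ω := by
    filter_upwards [measure_eq_zero_iff_ae_notMem.mp hS0] with ω hω
    exact (hSpos ω).lt_of_ne (Ne.symm hω)
  intro K _
  refine ⟨fun H _ => ?_, integral_max_sub_const_eq_integral_Ioi_meas_le hMint K⟩
  rw [← Measure.real_def, ← measureReal_restrict_apply_univ]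
  exact tendsto_integral_max_sub_sub_integral_div_nhdsGT_zero hSint.restrict
    (ae_restrict_of_ae hSpos_ae)

theorem stmt6 {Ω : Type*} [MeasurableSpace Ω] (Q : Measure Ω) [IsProbabilityMeasure Q]
    (S M : Ω → ℝ) (hSm : Measurable S) (hMm : Measurable M)
    (hSpos : ∀ ω, 0 ≤ S ω) (hMpos : ∀ ω, 0 ≤ M ω)
    (hSint : Integrable S Q) (hMint : Integrable M Q) (hS0 : Q {ω | S ω = 0} = 0) :
    ∀ K : ℝ, 0 ≤ K →
      (∀ H : ℝ, 0 < H →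
        Tendsto (fun k =>
            ((∫ ω in {ω | H ≤ M ω}, max (S ω - k) 0 ∂Q) -
              ∫ ω in {ω | H ≤ M ω}, S ω ∂Q) / k)
          (𝓝[>] (0:ℝ)) (𝓝 (-(Q {ω | H ≤ M ω}).toReal))) ∧
      ∫ ω, max (M ω - K) 0 ∂Q = ∫ H in Set.Ioi K, (Q {ω | H ≤ M ω}).toReal :=
  stmt6_general Q S M hSpos hSint hMint hS0
end

section
/- Let X be a nonnegative random variable, Y integrable, and let f be continuous on [α, β] and continuously differentiable on (α, β) with 0 ≤ α < β < ∞. Set g(x) = f(x)·1_{[α,β]}(x). Then E[g(X)Y] = f(α)E[1_{X ≥ α} Y] - f(β)E[1_{X > β} Y] + ∫_α^β f'(a) E[1_{X > a} Y] da. -/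
/-!
Clamp the argument of `f` to a compact interval `[u, v] ⊆ (α, β)`. For the clamped function the
identity holds pointwise, by the fundamental theorem of calculus,
`f (max u (min x v)) = f u + ∫_{(u, v)} f' a · 1_{a < x} da`; multiplying by `Y` and exchanging the
two integrals (Fubini, `f'` being integrable on `[u, v]`) gives the identity in expectation.
Then let `u ↓ α` and `v ↑ β`: the left side converges by dominated convergence since `f` is
bounded on `[α, β]`, the boundary terms by continuity of `f`, and the last integral by monotone
exhaustion of `(α, β)`. This is where the integrability of `a ↦ f' a · E[1_{X > a} Y]` enters:
`f'` itself need not be integrable near `α` and `β`.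
-/

open MeasureTheory Filter Set Topology

theorem ContinuousOn.tendsto_comp_of_mem {E F ι : Type*} [TopologicalSpace E]
    [TopologicalSpace F] {f : E → F} {s : Set E} {x : E} {l : Filter ι} {g : ι → E}
    (hf : ContinuousOn f s) (hx : x ∈ s) (hg : Tendsto g l (𝓝 x)) (hgs : ∀ n, g n ∈ s) :
    Tendsto (fun n => f (g n)) l (𝓝 (f x)) :=
  (hf x hx).tendsto.comp (tendsto_nhdsWithin_iff.2 ⟨hg, .of_forall hgs⟩)

section Clamp

variable {f f' : ℝ → ℝ} {u v : ℝ}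

theorem apply_clamp_eq_add_setIntegral (huv : u ≤ v) (hfc : ContinuousOn f (Icc u v))
    (hfd : ∀ x ∈ Ioo u v, HasDerivAt f (f' x) x) (hf' : IntegrableOn f' (Ioo u v)) (x : ℝ) :
    f (max u (min x v)) = f u + ∫ a in Ioo u v, (Iio x).indicator f' a := by
  set c := max u (min x v)
  have hc : c ∈ Icc u v := ⟨le_max_left _ _, max_le huv (min_le_right _ _)⟩
  have hIoo : Ioo u v ∩ Iio x = Ioo u c := by
    ext a
    simp only [c, mem_inter_iff, mem_Ioo, mem_Iio, lt_max_iff, lt_min_iff]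
    constructor
    · rintro ⟨⟨hua, hav⟩, hax⟩
      exact ⟨hua, Or.inr ⟨hax, hav⟩⟩
    · rintro ⟨hua, hau | ⟨hax, hav⟩⟩
      · exact absurd hua hau.not_gt
      · exact ⟨⟨hua, hav⟩, hax⟩
  have hftc : ∫ a in Ioo u c, f' a = f c - f u := by
    rw [← integral_Ioc_eq_integral_Ioo, ← intervalIntegral.integral_of_le hc.1]
    refine intervalIntegral.integral_eq_sub_of_hasDerivAt_of_le hc.1
      (hfc.mono (Icc_subset_Icc_right hc.2))
      (fun y hy => hfd y (Ioo_subset_Ioo_right hc.2 hy)) ?_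
    exact (intervalIntegrable_iff_integrableOn_Ioo_of_le hc.1).2
      (hf'.mono_set (Ioo_subset_Ioo_right hc.2))
  rw [setIntegral_indicator measurableSet_Iio, hIoo, hftc]
  ring

theorem indicator_Icc_apply_clamp_eq {α β : ℝ} (hαu : α ≤ u) (huv : u ≤ v) (hvβ : v ≤ β)
    (hfc : ContinuousOn f (Icc u v)) (hfd : ∀ x ∈ Ioo u v, HasDerivAt f (f' x) x)
    (hf' : IntegrableOn f' (Ioo u v)) (x : ℝ) :
    (Icc α β).indicator (fun y => f (max u (min y v))) x =
      (Ici α).indicator (fun _ => f u) x - (Ioi β).indicator (fun _ => f v) x +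
        ∫ a in Ioo u v, (Iio x).indicator f' a := by
  have hclamp := apply_clamp_eq_add_setIntegral huv hfc hfd hf' x
  rcases lt_or_ge x α with hxα | hαx
  · rw [max_eq_left ((min_le_left _ _).trans (hxα.le.trans hαu))] at hclamp
    rw [indicator_of_notMem (s := Icc α β) (fun h => hxα.not_ge h.1),
      indicator_of_notMem (s := Ici α) hxα.not_ge,
      indicator_of_notMem (s := Ioi β) (hxα.trans_le (hαu.trans (huv.trans hvβ))).not_gt]
    linarith
  rcases le_or_gt x β with hxβ | hβx
  · rw [indicator_of_mem (s := Icc α β) ⟨hαx, hxβ⟩, indicator_of_mem (s := Ici α) hαx,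
      indicator_of_notMem (s := Ioi β) hxβ.not_gt, hclamp]
    ring
  · rw [min_eq_right (hvβ.trans hβx.le), max_eq_right huv] at hclamp
    rw [indicator_of_notMem (s := Icc α β) (fun h => hβx.not_ge h.2),
      indicator_of_mem (s := Ici α) hαx, indicator_of_mem (s := Ioi β) hβx]
    linarith

end Clamp

theorem iUnion_Ioo_eq_Ioo_of_tendsto {α β : ℝ} {u v : ℕ → ℝ} (hu : Tendsto u atTop (𝓝 α))
    (hv : Tendsto v atTop (𝓝 β)) (hαu : ∀ n, α ≤ u n) (hvβ : ∀ n, v n ≤ β) :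
    ⋃ n, Ioo (u n) (v n) = Ioo α β := by
  refine Subset.antisymm (iUnion_subset fun n => Ioo_subset_Ioo (hαu n) (hvβ n)) ?_
  rintro x ⟨hαx, hxβ⟩
  obtain ⟨n, hux, hxv⟩ :=
    ((hu.eventually_lt_const hαx).and (hv.eventually_const_lt hxβ)).exists
  exact mem_iUnion.2 ⟨n, hux, hxv⟩

section Expectation

variable {Ω : Type*} {X Y : Ω → ℝ}

theorem integral_mul_indicator_lt_eq {μ : Measure ℝ} {h : ℝ → ℝ} (ω : Ω) :
    ∫ a, h a * {ω | a < X ω}.indicator Y ω ∂μ = (∫ a, (Iio (X ω)).indicator h a ∂μ) * Y ω := by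
  rw [← integral_mul_const]
  congr 1 with a
  by_cases ha : a < X ω <;> simp [ha]

theorem indicator_const_comp_mul_eq (s : Set ℝ) (c : ℝ) :
    (fun ω => s.indicator (fun _ => c) (X ω) * Y ω) = (X ⁻¹' s).indicator (fun ω => c * Y ω) := by
  ext ω
  by_cases hω : X ω ∈ s <;> simp [hω]

variable [MeasurableSpace Ω] {Q : Measure Ω} {μ : Measure ℝ} {h : ℝ → ℝ}

theorem integrable_prod_mul_indicator_lt (hXm : Measurable X) (hY : Integrable Y Q)
    (hh : Integrable h μ) :
    Integrable (fun p : ℝ × Ω => h p.1 * {ω | p.1 < X ω}.indicator Y p.2) (μ.prod Q) := by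
  have hmeas : MeasurableSet {p : ℝ × Ω | p.1 < X p.2} :=
    measurableSet_lt measurable_fst (hXm.comp measurable_snd)
  refine (hh.mul_prod hY).mono (hh.1.comp_fst.mul ((hY.1.comp_snd).indicator hmeas)) ?_
  refine .of_forall fun p => ?_
  simp only [norm_mul]
  gcongr
  exact norm_indicator_le_norm_self Y p.2

theorem integrable_integral_indicator_Iio_mul [SFinite μ] [SFinite Q] (hXm : Measurable X)
    (hY : Integrable Y Q) (hh : Integrable h μ) :
    Integrable (fun ω => (∫ a, (Iio (X ω)).indicator h a ∂μ) * Y ω) Q := by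
  simpa only [integral_mul_indicator_lt_eq] using
    (integrable_prod_mul_indicator_lt hXm hY hh).integral_prod_right

theorem integral_integral_indicator_Iio_mul [SFinite μ] [SFinite Q] (hXm : Measurable X)
    (hY : Integrable Y Q) (hh : Integrable h μ) :
    ∫ ω, (∫ a, (Iio (X ω)).indicator h a ∂μ) * Y ω ∂Q =
      ∫ a, h a * ∫ ω in {ω | a < X ω}, Y ω ∂Q ∂μ := by
  simp only [← integral_mul_indicator_lt_eq]
  rw [← integral_integral_swap (integrable_prod_mul_indicator_lt hXm hY hh)]
  congr 1 with a
  rw [integral_const_mul, integral_indicator (measurableSet_lt measurable_const hXm)]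

theorem integrable_indicator_const_comp_mul (hXm : Measurable X) (hY : Integrable Y Q)
    {s : Set ℝ} (hs : MeasurableSet s) (c : ℝ) :
    Integrable (fun ω => s.indicator (fun _ => c) (X ω) * Y ω) Q := by
  rw [indicator_const_comp_mul_eq]
  exact (hY.const_mul c).indicator (hXm hs)

theorem integral_indicator_const_comp_mul (hXm : Measurable X) {s : Set ℝ} (hs : MeasurableSet s)
    (c : ℝ) : ∫ ω, s.indicator (fun _ => c) (X ω) * Y ω ∂Q = c * ∫ ω in X ⁻¹' s, Y ω ∂Q := by
  rw [indicator_const_comp_mul_eq, integral_indicator (hXm hs), integral_const_mul]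

variable {f f' : ℝ → ℝ} {α β : ℝ}

theorem integral_indicator_Icc_apply_clamp_mul [SFinite Q] (hXm : Measurable X)
    (hY : Integrable Y Q) {u v : ℝ} (hαu : α ≤ u) (huv : u ≤ v) (hvβ : v ≤ β)
    (hfc : ContinuousOn f (Icc u v)) (hfd : ∀ x ∈ Ioo u v, HasDerivAt f (f' x) x)
    (hf' : IntegrableOn f' (Ioo u v)) :
    ∫ ω, (Icc α β).indicator (fun y => f (max u (min y v))) (X ω) * Y ω ∂Q =
      f u * (∫ ω in {ω | α ≤ X ω}, Y ω ∂Q) - f v * (∫ ω in {ω | β < X ω}, Y ω ∂Q) +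
        ∫ a in Ioo u v, f' a * ∫ ω in {ω | a < X ω}, Y ω ∂Q := by
  simp only [indicator_Icc_apply_clamp_eq hαu huv hvβ hfc hfd hf', add_mul, sub_mul]
  have hα := integrable_indicator_const_comp_mul hXm hY (measurableSet_Ici (a := α)) (f u)
  have hβ := integrable_indicator_const_comp_mul hXm hY (measurableSet_Ioi (a := β)) (f v)
  rw [integral_add ?_ (integrable_integral_indicator_Iio_mul hXm hY hf'),
    integral_sub hα hβ,
    integral_indicator_const_comp_mul hXm measurableSet_Ici,
    integral_indicator_const_comp_mul hXm measurableSet_Ioi,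
    integral_integral_indicator_Iio_mul hXm hY hf']
  · rfl
  · exact hα.sub hβ

theorem tendsto_integral_indicator_Icc_apply_clamp_mul {u v : ℕ → ℝ} (hXm : Measurable X)
    (hY : Integrable Y Q) (hfc : ContinuousOn f (Icc α β)) (hu : Tendsto u atTop (𝓝 α))
    (hv : Tendsto v atTop (𝓝 β)) (hαu : ∀ n, α ≤ u n) (huv : ∀ n, u n ≤ v n)
    (hvβ : ∀ n, v n ≤ β) :
    Tendsto
      (fun n => ∫ ω, (Icc α β).indicator (fun y => f (max (u n) (min y (v n)))) (X ω) * Y ω ∂Q)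
      atTop (𝓝 (∫ ω, (Icc α β).indicator f (X ω) * Y ω ∂Q)) := by
  have hmem (n : ℕ) (y : ℝ) : max (u n) (min y (v n)) ∈ Icc α β :=
    ⟨(hαu n).trans (le_max_left _ _), max_le ((huv n).trans (hvβ n))
      ((min_le_right _ _).trans (hvβ n))⟩
  obtain ⟨C, hC⟩ := isCompact_Icc.exists_bound_of_continuousOn hfc
  refine tendsto_integral_of_dominated_convergence (fun ω => C * ‖Y ω‖) (fun n => ?_)
    (hY.norm.const_mul C) (fun n => .of_forall fun ω => ?_) (.of_forall fun ω => ?_)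
  · have hcont : Continuous fun y => f (max (u n) (min y (v n))) :=
      hfc.comp_continuous (by fun_prop) (hmem n)
    exact ((hcont.measurable.indicator measurableSet_Icc).comp hXm).aestronglyMeasurable.mul hY.1
  · rw [norm_mul]
    gcongr
    exact (norm_indicator_le_norm_self _ _).trans (hC _ (hmem n _))
  · refine Tendsto.mul_const _ ?_
    by_cases hx : X ω ∈ Icc α β
    · simp only [indicator_of_mem hx]
      refine hfc.tendsto_comp_of_mem hx ?_ (fun n => hmem n _)
      have hlim := hu.max ((tendsto_const_nhds (x := X ω)).min hv)
      rwa [min_eq_left hx.2, max_eq_right hx.1] at hlim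
    · simp only [indicator_of_notMem hx]
      exact tendsto_const_nhds

end Expectation

theorem stmt8_general {Ω : Type*} [MeasurableSpace Ω] (Q : Measure Ω) [IsProbabilityMeasure Q]
    (X Y : Ω → ℝ) (hXm : Measurable X) (hY : Integrable Y Q)
    (α β : ℝ) (hαβ : α < β)
    (f f' : ℝ → ℝ) (hfc : ContinuousOn f (Set.Icc α β))
    (hfd : ∀ x ∈ Set.Ioo α β, HasDerivAt f (f' x) x)
    (hf'c : ContinuousOn f' (Set.Ioo α β))
    (hf'int : IntegrableOn (fun a => f' a * ∫ ω in {ω | a < X ω}, Y ω ∂Q) (Set.Ioo α β)) :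
    ∫ ω, Set.indicator (Set.Icc α β) f (X ω) * Y ω ∂Q =
      f α * (∫ ω in {ω | α ≤ X ω}, Y ω ∂Q) - f β * (∫ ω in {ω | β < X ω}, Y ω ∂Q) +
        ∫ a in Set.Ioo α β, f' a * ∫ ω in {ω | a < X ω}, Y ω ∂Q := by
  obtain ⟨u, hu_anti, hu_mem, hu⟩ := exists_seq_strictAnti_tendsto' (left_lt_add_div_two.2 hαβ)
  obtain ⟨v, hv_mono, hv_mem, hv⟩ := exists_seq_strictMono_tendsto' (add_div_two_lt_right.2 hαβ)
  have hαu (n : ℕ) : α ≤ u n := (hu_mem n).1.le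
  have hvβ (n : ℕ) : v n ≤ β := (hv_mem n).2.le
  have huv (n : ℕ) : u n ≤ v n := ((hu_mem n).2.trans (hv_mem n).1).le
  have hsub (n : ℕ) : Icc (u n) (v n) ⊆ Ioo α β :=
    Icc_subset_Ioo (hu_mem n).1 (hv_mem n).2
  have htrunc (n : ℕ) := integral_indicator_Icc_apply_clamp_mul hXm hY (hαu n) (huv n)
    (hvβ n) (hfc.mono ((hsub n).trans Ioo_subset_Icc_self))
    (fun x hx => hfd x (hsub n (Ioo_subset_Icc_self hx)))
    ((hf'c.mono (hsub n)).integrableOn_Icc.mono_set Ioo_subset_Icc_self)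
  have hunion := iUnion_Ioo_eq_Ioo_of_tendsto hu hv hαu hvβ
  refine tendsto_nhds_unique
    (tendsto_integral_indicator_Icc_apply_clamp_mul hXm hY hfc hu hv hαu huv hvβ) ?_
  simp only [htrunc]
  refine (((hfc.tendsto_comp_of_mem (left_mem_Icc.2 hαβ.le) hu fun n => ?_).mul_const _).sub
    ((hfc.tendsto_comp_of_mem (right_mem_Icc.2 hαβ.le) hv fun n => ?_).mul_const _)).add ?_
  · exact ⟨hαu n, (huv n).trans (hvβ n)⟩
  · exact ⟨(hαu n).trans (huv n), hvβ n⟩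
  · rw [← hunion] at hf'int ⊢
    exact tendsto_setIntegral_of_monotone (fun n => measurableSet_Ioo)
      (fun m n hmn => Ioo_subset_Ioo (hu_anti.antitone hmn) (hv_mono.monotone hmn)) hf'int

theorem stmt8 {Ω : Type*} [MeasurableSpace Ω] (Q : Measure Ω) [IsProbabilityMeasure Q]
    (X Y : Ω → ℝ) (hXm : Measurable X) (hXpos : ∀ ω, 0 ≤ X ω) (hY : Integrable Y Q)
    (α β : ℝ) (hα : 0 ≤ α) (hαβ : α < β)
    (f f' : ℝ → ℝ) (hfc : ContinuousOn f (Set.Icc α β))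
    (hfd : ∀ x ∈ Set.Ioo α β, HasDerivAt f (f' x) x)
    (hf'c : ContinuousOn f' (Set.Ioo α β))
    (hgint : Integrable (fun ω => Set.indicator (Set.Icc α β) f (X ω) * Y ω) Q)
    (hf'int : IntegrableOn (fun a => f' a * ∫ ω in {ω | a < X ω}, Y ω ∂Q) (Set.Ioo α β)) :
    ∫ ω, Set.indicator (Set.Icc α β) f (X ω) * Y ω ∂Q =
      f α * (∫ ω in {ω | α ≤ X ω}, Y ω ∂Q) - f β * (∫ ω in {ω | β < X ω}, Y ω ∂Q) +
        ∫ a in Set.Ioo α β, f' a * ∫ ω in {ω | a < X ω}, Y ω ∂Q :=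
  stmt8_general Q X Y hXm hY α β hαβ f f' hfc hfd hf'c hf'int
end

section
/- Let X₁, X₂ be nonnegative integrable random variables and K₁, K₂, K ≥ 0. Then E[((X₁-K₁)^+ + (X₂-K₂)^+ - K)^+] = ∫_{K₁+K}^∞ Q(X₁ > z) dz + ∫_{K₂+K}^∞ Q(X₂ > z) dz + ∫_{K₂}^{K₂+K} Q(X₂ > z ∧ X₁ > K₁ + K₂ + K - z) dz. -/
open MeasureTheory Set

/-!
Splitting at the kinks, the payoff is the sum of a call on `X₁` struck at `K₁ + K`, a call on
`X₂` struck at `K₂ + K`, and the length of the interval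
`(max (K₁ + K₂ + K - X₁) K₂, min X₂ (K₂ + K))`. The layer-cake formula turns the expectation of
each call into the integral of its tail probabilities, and Fubini on the region
`{(z, ω) | K₂ < z < K₂ + K, K₁ + K₂ + K - X₁ ω < z < X₂ ω}` turns the expected interval length
into the integral of the joint digital prices.
-/

theorem two_call_basket_payoff_eq (x y K₁ K₂ K : ℝ) (hK : 0 ≤ K) :
    max (max (x - K₁) 0 + max (y - K₂) 0 - K) 0 =
      max (x - (K₁ + K)) 0 + max (y - (K₂ + K)) 0 +
        max (min y (K₂ + K) - max (K₁ + K₂ + K - x) K₂) 0 := by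
  grind

theorem setIntegral_Ioi_zero_comp_add_right {E : Type*} [NormedAddCommGroup E] [NormedSpace ℝ E]
    (g : ℝ → E) (c : ℝ) : ∫ t in Ioi 0, g (t + c) = ∫ z in Ioi c, g z := by
  have := (measurePreserving_add_right volume c).setIntegral_preimage_emb
    (measurableEmbedding_addRight c) g (Ioi c)
  rwa [preimage_add_const_Ioi, sub_self] at this

theorem integral_measureReal_prodMk_left_eq_right {α β : Type*} [MeasurableSpace α]
    [MeasurableSpace β] (μ : Measure α) (ν : Measure β) [IsFiniteMeasure μ] [IsFiniteMeasure ν]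
    {s : Set (α × β)} (hs : MeasurableSet s) :
    ∫ x, ν.real (Prod.mk x ⁻¹' s) ∂μ = ∫ y, μ.real ((·, y) ⁻¹' s) ∂ν := by
  simp only [measureReal_def]
  rw [integral_toReal (measurable_measure_prodMk_left hs).aemeasurable
      (ae_of_all _ fun _ => measure_lt_top _ _),
    integral_toReal (measurable_measure_prodMk_right hs).aemeasurable
      (ae_of_all _ fun _ => measure_lt_top _ _),
    ← Measure.prod_apply hs, ← Measure.prod_apply_symm hs]

section

variable {Ω : Type*} [MeasurableSpace Ω] (μ : Measure Ω) [IsFiniteMeasure μ]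

theorem integral_max_sub_zero_eq_setIntegral_measureReal_lt {X : Ω → ℝ} (hX : Integrable X μ)
    (c : ℝ) : ∫ ω, max (X ω - c) 0 ∂μ = ∫ z in Ioi c, μ.real {ω | z < X ω} := by
  have hpos : Integrable (fun ω => max (X ω - c) 0) μ := (hX.sub (integrable_const c)).pos_part
  rw [hpos.integral_eq_integral_meas_lt (ae_of_all _ fun ω => le_max_right _ _),
    ← setIntegral_Ioi_zero_comp_add_right (fun z => μ.real {ω | z < X ω}) c]
  refine setIntegral_congr_fun measurableSet_Ioi fun t (ht : 0 < t) => ?_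
  congr 1
  ext ω
  simp only [mem_ofPred_eq, lt_max_iff, lt_sub_iff_add_lt]
  exact or_iff_left ht.not_gt

theorem setIntegral_Ioo_measureReal_mem_Ioo {f g : Ω → ℝ} (hf : Measurable f) (hg : Measurable g)
    (a b : ℝ) :
    ∫ z in Ioo a b, μ.real {ω | z ∈ Ioo (f ω) (g ω)} =
      ∫ ω, max (min (g ω) b - max (f ω) a) 0 ∂μ := by
  have hB : MeasurableSet {p : ℝ × Ω | p.1 ∈ Ioo (f p.2) (g p.2)} :=
    (measurableSet_lt (hf.comp measurable_snd) measurable_fst).inter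
      (measurableSet_lt measurable_fst (hg.comp measurable_snd))
  have : IsFiniteMeasure (volume.restrict (Ioo a b)) :=
    isFiniteMeasure_restrict.2 measure_Ioo_lt_top.ne
  refine (integral_measureReal_prodMk_left_eq_right _ μ hB).trans
    (integral_congr_ae (ae_of_all _ fun ω => ?_))
  change (volume.restrict (Ioo a b)).real (Ioo (f ω) (g ω)) = _
  rw [measureReal_restrict_apply measurableSet_Ioo, Ioo_inter_Ioo, Real.volume_real_Ioo]

end

theorem stmt12_general {Ω : Type*} [MeasurableSpace Ω] (Q : Measure Ω) [IsProbabilityMeasure Q]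
    (X₁ X₂ : Ω → ℝ) (h1m : Measurable X₁) (h2m : Measurable X₂)
    (h1int : Integrable X₁ Q) (h2int : Integrable X₂ Q)
    (K₁ K₂ K : ℝ) (hK : 0 ≤ K) :
    ∫ ω, max (max (X₁ ω - K₁) 0 + max (X₂ ω - K₂) 0 - K) 0 ∂Q =
      (∫ z in Set.Ioi (K₁ + K), (Q {ω | z < X₁ ω}).toReal) +
        (∫ z in Set.Ioi (K₂ + K), (Q {ω | z < X₂ ω}).toReal) +
        ∫ z in Set.Ioo K₂ (K₂ + K), (Q {ω | z < X₂ ω ∧ K₁ + K₂ + K - z < X₁ ω}).toReal := by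
  have hcall₁ : Integrable (fun ω => max (X₁ ω - (K₁ + K)) 0) Q :=
    (h1int.sub (integrable_const _)).pos_part
  have hcall₂ : Integrable (fun ω => max (X₂ ω - (K₂ + K)) 0) Q :=
    (h2int.sub (integrable_const _)).pos_part
  have hcalls : Integrable (fun ω => max (X₁ ω - (K₁ + K)) 0 + max (X₂ ω - (K₂ + K)) 0) Q :=
    hcall₁.add hcall₂
  have hspread : Integrable
      (fun ω => max (min (X₂ ω) (K₂ + K) - max (K₁ + K₂ + K - X₁ ω) K₂) 0) Q :=
    ((h2int.inf (integrable_const _)).sub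
      (((integrable_const _).sub h1int).sup (integrable_const _))).pos_part
  have hjoint : ∀ z, {ω | z < X₂ ω ∧ K₁ + K₂ + K - z < X₁ ω} =
      {ω | z ∈ Ioo (K₁ + K₂ + K - X₁ ω) (X₂ ω)} := fun z => by
    ext ω
    simp only [mem_ofPred_eq, mem_Ioo, sub_lt_comm, and_comm]
  simp only [← measureReal_def, hjoint,
    ← integral_max_sub_zero_eq_setIntegral_measureReal_lt Q h1int,
    ← integral_max_sub_zero_eq_setIntegral_measureReal_lt Q h2int,
    setIntegral_Ioo_measureReal_mem_Ioo Q (h1m.const_sub _) h2m,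
    two_call_basket_payoff_eq _ _ _ _ _ hK]
  rw [integral_add hcalls hspread, integral_add hcall₁ hcall₂]

theorem stmt12 {Ω : Type*} [MeasurableSpace Ω] (Q : Measure Ω) [IsProbabilityMeasure Q]
    (X₁ X₂ : Ω → ℝ) (h1m : Measurable X₁) (h2m : Measurable X₂)
    (h1pos : ∀ ω, 0 ≤ X₁ ω) (h2pos : ∀ ω, 0 ≤ X₂ ω)
    (h1int : Integrable X₁ Q) (h2int : Integrable X₂ Q)
    (K₁ K₂ K : ℝ) (hK₁ : 0 ≤ K₁) (hK₂ : 0 ≤ K₂) (hK : 0 ≤ K) :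
    ∫ ω, max (max (X₁ ω - K₁) 0 + max (X₂ ω - K₂) 0 - K) 0 ∂Q =
      (∫ z in Set.Ioi (K₁ + K), (Q {ω | z < X₁ ω}).toReal) +
        (∫ z in Set.Ioi (K₂ + K), (Q {ω | z < X₂ ω}).toReal) +
        ∫ z in Set.Ioo K₂ (K₂ + K), (Q {ω | z < X₂ ω ∧ K₁ + K₂ + K - z < X₁ ω}).toReal :=
  stmt12_general Q X₁ X₂ h1m h2m h1int h2int K₁ K₂ K hK
end

section
/- Let F be a set of nonnegative Borel functions on ℝ₊ⁿ and Q a family of Borel probability measures on ℝ₊ⁿ. Assume that for all n-tuples f₁,...,fₘ ∈ F and all K₁,...,Kₘ ≥ 0, the integral ∫ ∏ᵢ(fᵢ - Kᵢ)^+ dQ exists and is the same for every Q in the family. Then all measures in the family agree on the σ-algebra σ(F) generated by F. Consequently, if g is σ(F)-measurable and Q₀-integrable for some Q₀ in the family, then ∫ g dQ = ∫ g dQ₀ for every Q in the family. -/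
/-!
The indicator of `⋂ i, {K i < f i}` is the increasing limit, as `c → ∞`, of
`∏ i, min 1 (c (f i - K i)⁺)`, and since `min 1 (c t⁺) = c (t⁺ - (t - 1/c)⁺)` each of these
products expands into a signed combination of products of calls `∏ i, (f i - L i)⁺` with strikes
`L ≥ K`. Equal call prices therefore give equal measures of these finite intersections, which form
a π-system generating `σ(F)` (the `f ∈ F` being nonnegative, strikes `K ≥ 0` suffice), and Dynkin's
π-λ theorem extends the equality to `σ(F)`.
-/

open MeasureTheory Filter Set Topology

open scoped Finset

abbrev PosOrthant (n : ℕ) := {x : Fin n → ℝ // ∀ i, 0 ≤ x i}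

lemma min_one_mul_max_zero {c : ℝ} (hc : 0 < c) (t : ℝ) :
    min 1 (c * max t 0) = c * (max t 0 - max (t - c⁻¹) 0) := by
  have hcc : c * c⁻¹ = 1 := mul_inv_cancel₀ hc.ne'
  rcases le_total t 0 with ht | ht
  · rw [max_eq_right ht, max_eq_right (by linarith [inv_pos.2 hc])]
    simp
  rcases le_total t c⁻¹ with htc | htc
  · rw [max_eq_left ht, max_eq_right (sub_nonpos.2 htc), sub_zero,
      min_eq_right (by nlinarith)]
  · rw [max_eq_left ht, max_eq_left (sub_nonneg.2 htc), min_eq_left (by nlinarith)]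
    linear_combination -hcc

lemma prod_min_one_mul_max_zero {ι : Type*} [Fintype ι] [DecidableEq ι] {c : ℝ} (hc : 0 < c)
    (a : ι → ℝ) :
    ∏ i, min 1 (c * max (a i) 0) =
      c ^ Fintype.card ι *
        ∑ t : Finset ι, (-1) ^ #t * ∏ i, max (a i - if i ∈ t then c⁻¹ else 0) 0 := by
  simp_rw [min_one_mul_max_zero hc, Finset.prod_mul_distrib, Finset.prod_const, Finset.card_univ,
    Finset.prod_sub, Finset.powerset_univ, mul_assoc]
  congr 1
  refine Finset.sum_congr rfl fun t _ => ?_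
  have hsplit := Finset.prod_piecewise Finset.univ t (fun i => max (a i - c⁻¹) 0)
    fun i => max (a i) 0
  rw [Finset.univ_inter] at hsplit
  rw [mul_comm (∏ i ∈ Finset.univ \ t, _), ← hsplit]
  refine congrArg _ (Finset.prod_congr rfl fun i _ => ?_)
  by_cases hi : i ∈ t <;> simp [hi]

lemma tendsto_prod_min_one_mul_max_zero {ι : Type*} [Fintype ι] (a : ι → ℝ) :
    Tendsto (fun c : ℝ => ∏ i, min 1 (c * max (a i) 0)) atTop
      (𝓝 (if ∀ i, 0 < a i then 1 else 0)) := by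
  split_ifs with ha
  · have hlarge : ∀ i, ∀ᶠ c in atTop, 1 ≤ c * max (a i) 0 := fun i =>
      (tendsto_id.atTop_mul_const (lt_max_of_lt_left (ha i))).eventually_ge_atTop 1
    refine tendsto_const_nhds.congr' ?_
    filter_upwards [eventually_all.2 hlarge] with c hc
    exact (Finset.prod_eq_one fun i _ => min_eq_left (hc i)).symm
  · obtain ⟨i, hi⟩ := not_forall.1 ha
    refine tendsto_const_nhds.congr fun c => (Finset.prod_eq_zero (Finset.mem_univ i) ?_).symm
    simp [max_eq_right (not_lt.1 hi)]

section CallProducts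

variable {α ι : Type*} [MeasurableSpace α] [Fintype ι] {μ ν : Measure α}
  {f : ι → α → ℝ} {K : ι → ℝ}

lemma tendsto_integral_prod_min_one_mul_max_sub [IsFiniteMeasure μ] (hf : ∀ i, Measurable (f i)) :
    Tendsto (fun c : ℝ => ∫ x, ∏ i, min 1 (c * max (f i x - K i) 0) ∂μ) atTop
      (𝓝 (μ.real (⋂ i, {x | K i < f i x}))) := by
  have hA : MeasurableSet (⋂ i, {x | K i < f i x}) :=
    .iInter fun i => measurableSet_lt measurable_const (hf i)
  rw [← integral_indicator_one hA]
  refine tendsto_integral_filter_of_dominated_convergence (fun _ => 1)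
    (.of_forall fun c => (Finset.measurable_prod _ fun i _ => by fun_prop).aestronglyMeasurable)
    ((eventually_ge_atTop 0).mono fun c hc => ae_of_all _ fun x => ?_) (integrable_const 1)
    (ae_of_all _ fun x => ?_)
  · have hfac : ∀ i, 0 ≤ min 1 (c * max (f i x - K i) 0) := fun i =>
      le_min zero_le_one (by positivity)
    rw [Real.norm_of_nonneg (Finset.prod_nonneg fun i _ => hfac i)]
    exact Finset.prod_le_one (fun i _ => hfac i) fun i _ => min_le_left _ _
  · convert tendsto_prod_min_one_mul_max_zero fun i => f i x - K i using 2
    by_cases hx : ∀ i, K i < f i x <;> simp [hx, sub_pos]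

lemma integral_prod_min_one_mul_max_sub [DecidableEq ι] {c : ℝ} (hc : 0 < c)
    (hint : ∀ L, K ≤ L → Integrable (fun x => ∏ i, max (f i x - L i) 0) μ) :
    ∫ x, ∏ i, min 1 (c * max (f i x - K i) 0) ∂μ =
      c ^ Fintype.card ι * ∑ t : Finset ι, (-1) ^ #t *
        ∫ x, ∏ i, max (f i x - (K i + if i ∈ t then c⁻¹ else 0)) 0 ∂μ := by
  have hKt : ∀ t : Finset ι, K ≤ fun i => K i + if i ∈ t then c⁻¹ else 0 := fun t i =>
    le_add_of_nonneg_right (by split_ifs <;> positivity)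
  simp_rw [prod_min_one_mul_max_zero hc, sub_sub]
  rw [integral_const_mul, integral_finsetSum _ fun t _ => (hint _ (hKt t)).const_mul _]
  simp_rw [integral_const_mul]

theorem measure_iInter_lt_eq_of_integral_eq [IsFiniteMeasure μ] [IsFiniteMeasure ν]
    (hf : ∀ i, Measurable (f i))
    (hμ : ∀ L, K ≤ L → Integrable (fun x => ∏ i, max (f i x - L i) 0) μ)
    (hν : ∀ L, K ≤ L → Integrable (fun x => ∏ i, max (f i x - L i) 0) ν)
    (heq : ∀ L, K ≤ L →
      ∫ x, ∏ i, max (f i x - L i) 0 ∂μ = ∫ x, ∏ i, max (f i x - L i) 0 ∂ν) :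
    μ (⋂ i, {x | K i < f i x}) = ν (⋂ i, {x | K i < f i x}) := by
  classical
  have hsame : ∀ᶠ c : ℝ in atTop, ∫ x, ∏ i, min 1 (c * max (f i x - K i) 0) ∂μ =
      ∫ x, ∏ i, min 1 (c * max (f i x - K i) 0) ∂ν := by
    filter_upwards [eventually_gt_atTop 0] with c hc
    rw [integral_prod_min_one_mul_max_sub hc hμ, integral_prod_min_one_mul_max_sub hc hν]
    refine congrArg _ (Finset.sum_congr rfl fun t _ => congrArg _ (heq _ fun i => ?_))
    exact le_add_of_nonneg_right (by split_ifs <;> positivity)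
  rw [← measureReal_eq_measureReal_iff]
  exact tendsto_nhds_unique ((tendsto_integral_prod_min_one_mul_max_sub hf).congr' hsame)
    (tendsto_integral_prod_min_one_mul_max_sub hf)

end CallProducts

section GeneratedSigmaAlgebra

variable {α : Type*}

def superlevelInters (𝓕 : Set (α → ℝ)) : Set (Set α) :=
  {A | ∃ (m : ℕ) (f : Fin m → α → ℝ) (K : Fin m → ℝ),
    (∀ i, f i ∈ 𝓕) ∧ (∀ i, 0 ≤ K i) ∧ A = ⋂ i, {x | K i < f i x}}

lemma isPiSystem_superlevelInters (𝓕 : Set (α → ℝ)) : IsPiSystem (superlevelInters 𝓕) := by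
  rintro _ ⟨m₁, f₁, K₁, hf₁, hK₁, rfl⟩ _ ⟨m₂, f₂, K₂, hf₂, hK₂, rfl⟩ -
  refine ⟨m₁ + m₂, Fin.append f₁ f₂, Fin.append K₁ K₂, ?_, ?_, ?_⟩
  · simpa [Fin.forall_fin_add] using ⟨hf₁, hf₂⟩
  · simpa [Fin.forall_fin_add] using ⟨hK₁, hK₂⟩
  · ext x
    simp [Fin.forall_fin_add]

theorem generateFrom_superlevelInters {𝓕 : Set (α → ℝ)} (h𝓕 : ∀ f ∈ 𝓕, ∀ x, 0 ≤ f x) :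
    MeasurableSpace.generateFrom (superlevelInters 𝓕) =
      ⨆ f ∈ 𝓕, MeasurableSpace.comap f (inferInstance : MeasurableSpace ℝ) := by
  refine le_antisymm (MeasurableSpace.generateFrom_le ?_) (iSup₂_le fun f hf => ?_)
  · rintro _ ⟨m, f, K, hf, -, rfl⟩
    refine .iInter fun i => ?_
    exact le_iSup₂ (f := fun g (_ : g ∈ 𝓕) => MeasurableSpace.comap g inferInstance) (f i) (hf i)
      _ ⟨Ioi (K i), measurableSet_Ioi, rfl⟩
  rw [BorelSpace.measurable_eq (α := ℝ), borel_eq_generateFrom_Ioi ℝ,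
    MeasurableSpace.comap_generateFrom]
  refine MeasurableSpace.generateFrom_le ?_
  rintro _ ⟨_, ⟨K, rfl⟩, rfl⟩
  rcases le_or_gt 0 K with hK | hK
  · refine MeasurableSpace.measurableSet_generateFrom
      ⟨1, fun _ => f, fun _ => K, fun _ => hf, fun _ => hK, ?_⟩
    ext x
    simp
  · rw [show f ⁻¹' Ioi K = univ from eq_univ_of_forall fun x => hK.trans_le (h𝓕 f hf x)]
    exact .univ

end GeneratedSigmaAlgebra

section Trim

variable {α E : Type*} [NormedAddCommGroup E] {m m0 : MeasurableSpace α}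
  {μ ν : Measure[m0] α} {g : α → E}

lemma integrable_of_trim_eq (hm : m ≤ m0) (h : μ.trim hm = ν.trim hm)
    (hg : StronglyMeasurable[m] g) (hν : Integrable g ν) : Integrable g μ :=
  integrable_of_integrable_trim hm (h ▸ hν.trim hm hg)

lemma integral_eq_of_trim_eq [NormedSpace ℝ E] (hm : m ≤ m0) (h : μ.trim hm = ν.trim hm)
    (hg : StronglyMeasurable[m] g) : ∫ x, g x ∂μ = ∫ x, g x ∂ν := by
  rw [integral_trim hm hg, h, ← integral_trim hm hg]

end Trim

theorem stmt16 (n : ℕ) (𝓕 : Set (PosOrthant n → ℝ))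
    (h𝓕 : ∀ f ∈ 𝓕, Measurable f ∧ ∀ x, 0 ≤ f x)
    (𝒬 : Set (Measure (PosOrthant n)))
    (hprob : ∀ Q ∈ 𝒬, IsProbabilityMeasure Q)
    (hint : ∀ (m : ℕ) (f : Fin m → (PosOrthant n → ℝ)), (∀ i, f i ∈ 𝓕) →
      ∀ K : Fin m → ℝ, (∀ i, 0 ≤ K i) →
        ∀ Q ∈ 𝒬, Integrable (fun x => ∏ i, max (f i x - K i) 0) Q)
    (hsame : ∀ (m : ℕ) (f : Fin m → (PosOrthant n → ℝ)), (∀ i, f i ∈ 𝓕) →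
      ∀ K : Fin m → ℝ, (∀ i, 0 ≤ K i) →
        ∀ Q₁ ∈ 𝒬, ∀ Q₂ ∈ 𝒬,
          ∫ x, ∏ i, max (f i x - K i) 0 ∂Q₁ = ∫ x, ∏ i, max (f i x - K i) 0 ∂Q₂) :
    (∀ A : Set (PosOrthant n),
        MeasurableSet[⨆ f ∈ 𝓕, MeasurableSpace.comap f (inferInstance : MeasurableSpace ℝ)] A →
        ∀ Q₁ ∈ 𝒬, ∀ Q₂ ∈ 𝒬, Q₁ A = Q₂ A) ∧
    ∀ g : PosOrthant n → ℝ,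
      Measurable[⨆ f ∈ 𝓕, MeasurableSpace.comap f (inferInstance : MeasurableSpace ℝ)] g →
      ∀ Q₀ ∈ 𝒬, Integrable g Q₀ →
        ∀ Q ∈ 𝒬, Integrable g Q ∧ ∫ x, g x ∂Q = ∫ x, g x ∂Q₀ := by
  have hgen := generateFrom_superlevelInters fun f hf => (h𝓕 f hf).2
  have hle : (⨆ f ∈ 𝓕, MeasurableSpace.comap f (inferInstance : MeasurableSpace ℝ)) ≤
      (inferInstance : MeasurableSpace (PosOrthant n)) :=
    iSup₂_le fun f hf => (h𝓕 f hf).1.comap_le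
  have htrim : ∀ Q₁ ∈ 𝒬, ∀ Q₂ ∈ 𝒬, Q₁.trim hle = Q₂.trim hle := by
    intro Q₁ hQ₁ Q₂ hQ₂
    have := hprob Q₁ hQ₁
    have := hprob Q₂ hQ₂
    refine ext_of_generate_finite _ hgen.symm (isPiSystem_superlevelInters 𝓕) ?_ ?_
    · intro A hA
      have hAm := hgen ▸ MeasurableSpace.measurableSet_generateFrom hA
      obtain ⟨m, f, K, hf, hK, rfl⟩ := hA
      rw [trim_measurableSet_eq hle hAm, trim_measurableSet_eq hle hAm]
      exact measure_iInter_lt_eq_of_integral_eq (fun i => (h𝓕 _ (hf i)).1)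
        (fun L hL => hint m f hf L (fun i => (hK i).trans (hL i)) Q₁ hQ₁)
        (fun L hL => hint m f hf L (fun i => (hK i).trans (hL i)) Q₂ hQ₂)
        (fun L hL => hsame m f hf L (fun i => (hK i).trans (hL i)) Q₁ hQ₁ Q₂ hQ₂)
    · rw [trim_measurableSet_eq hle .univ, trim_measurableSet_eq hle .univ, measure_univ,
        measure_univ]
  refine ⟨fun A hA Q₁ hQ₁ Q₂ hQ₂ => ?_, fun g hg Q₀ hQ₀ hg₀ Q hQ => ?_⟩
  · rw [← trim_measurableSet_eq hle hA, htrim Q₁ hQ₁ Q₂ hQ₂, trim_measurableSet_eq hle hA]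
  · exact ⟨integrable_of_trim_eq hle (htrim Q hQ Q₀ hQ₀) hg.stronglyMeasurable hg₀,
      integral_eq_of_trim_eq hle (htrim Q hQ Q₀ hQ₀) hg.stronglyMeasurable⟩
end
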